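/- Let a, b be integers with a·b = 2 and consider the rings R₁ = ℤ[x₁,x₂]/⟨x₁^{n+1}, x₂(a x₁ + x₂)⟩ and R₂ = ℤ[x₁,x₂]/⟨x₁ⁿ(x₁ + b x₂), x₂(a x₁ + x₂)⟩, generators in degree 2. If n is even, then R₁ and R₂ are isomorphic as graded rings. -/

import Mathlib

/-!
The substitution `x₁ ↦ x₁ + b x₂, x₂ ↦ -x₂` is an involution of `ℤ[x₁, x₂]`. Since `ab = 2` it
sends the common relation `g = x₂(a x₁ + x₂)` to `-g`, and `(x₁ + b x₂)² = x₁² + b² g`. So for even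
`n` we get `(x₁ + b x₂)ⁿ ≡ x₁ⁿ (mod g)`, whence the substitution carries `x₁ⁿ⁺¹` to `x₁ⁿ(x₁ + b x₂)`
modulo `g` and maps the ideal of `R₁` onto that of `R₂`.
-/

open MvPolynomial

/-- `R₁ = ℤ[x₁,x₂]/⟨x₁^{n+1}, x₂(a·x₁+x₂)⟩`, the cohomology ring of
`ℂP^{n+1}_a # conj(ℂP^{n+1}_a)`, generators in degree 2. -/
noncomputable abbrev R₁ (n : ℕ) (a : ℤ) : Type :=
  MvPolynomial (Fin 2) ℤ ⧸
    Ideal.span ({(X 0 : MvPolynomial (Fin 2) ℤ) ^ (n + 1),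
      X 1 * (C a * X 0 + X 1)} : Set (MvPolynomial (Fin 2) ℤ))

/-- `R₂ = ℤ[x₁,x₂]/⟨x₁ⁿ(x₁+b·x₂), x₂(a·x₁+x₂)⟩`, the cohomology ring of
`ℂP^{n+1}_a # ℂP^{n+1}_a`, generators in degree 2. -/
noncomputable abbrev R₂ (n : ℕ) (a b : ℤ) : Type :=
  MvPolynomial (Fin 2) ℤ ⧸
    Ideal.span ({(X 0 : MvPolynomial (Fin 2) ℤ) ^ n * (X 0 + C b * X 1),
      X 1 * (C a * X 0 + X 1)} : Set (MvPolynomial (Fin 2) ℤ))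

noncomputable def u₁ (n : ℕ) (a : ℤ) : R₁ n a := Ideal.Quotient.mk _ (X 0)
noncomputable def u₂ (n : ℕ) (a : ℤ) : R₁ n a := Ideal.Quotient.mk _ (X 1)
noncomputable def v₁ (n : ℕ) (a b : ℤ) : R₂ n a b := Ideal.Quotient.mk _ (X 0)
noncomputable def v₂ (n : ℕ) (a b : ℤ) : R₂ n a b := Ideal.Quotient.mk _ (X 1)
namespace ConnectedSumCohomology

variable {R : Type*} [CommRing R]

noncomputable def shearReflect (b : R) : MvPolynomial (Fin 2) R ≃ₐ[R] MvPolynomial (Fin 2) R :=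
  have involutive : (aeval ![X 0 + C b * X 1, -X 1]).comp (aeval ![X 0 + C b * X 1, -X 1]) =
      AlgHom.id R (MvPolynomial (Fin 2) R) := by
    ext i; fin_cases i <;> simp
  AlgEquiv.ofAlgHom _ _ involutive involutive

@[simp]
lemma shearReflect_X_zero (b : R) : shearReflect b (X 0) = X 0 + C b * X 1 := by
  simp [shearReflect]

@[simp]
lemma shearReflect_X_one (b : R) : shearReflect b (X 1) = -X 1 := by
  simp [shearReflect]

@[simp]
lemma shearReflect_C (b r : R) : shearReflect b (C r) = C r :=
  (shearReflect b).commutes r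

variable {a b : R}

lemma C_mul_C_eq_two {σ : Type*} (hab : a * b = 2) : (C a * C b : MvPolynomial σ R) = 2 := by
  rw [← C_mul, hab, map_ofNat]

lemma shearReflect_relation (hab : a * b = 2) :
    shearReflect b (X 1 * (C a * X 0 + X 1)) = -(X 1 * (C a * X 0 + X 1)) := by
  simp only [map_mul, map_add, shearReflect_X_zero, shearReflect_X_one, shearReflect_C]
  linear_combination (-(X 1 * X 1) : MvPolynomial (Fin 2) R) * C_mul_C_eq_two hab

lemma relation_dvd_pow_sub_pow (hab : a * b = 2) {n : ℕ} (hn : Even n) :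
    X 1 * (C a * X 0 + X 1) ∣ (X 0 + C b * X 1 : MvPolynomial (Fin 2) R) ^ n - X 0 ^ n := by
  obtain ⟨m, rfl⟩ := hn
  have hsq : (X 0 + C b * X 1 : MvPolynomial (Fin 2) R) ^ 2 - X 0 ^ 2 =
      C b ^ 2 * (X 1 * (C a * X 0 + X 1)) := by
    linear_combination (-(C b * X 0 * X 1) : MvPolynomial (Fin 2) R) * C_mul_C_eq_two hab
  rw [← two_mul, pow_mul, pow_mul]
  exact (Dvd.intro_left _ hsq.symm).trans (sub_dvd_pow_sub_pow _ _ m)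

lemma map_shearReflect_span (hab : a * b = 2) {n : ℕ} (hn : Even n) :
    Ideal.map (shearReflect b : MvPolynomial (Fin 2) R →+* MvPolynomial (Fin 2) R)
      (Ideal.span {X 0 ^ (n + 1), X 1 * (C a * X 0 + X 1)}) =
      Ideal.span {X 0 ^ n * (X 0 + C b * X 1), X 1 * (C a * X 0 + X 1)} := by
  obtain ⟨q, hq⟩ := relation_dvd_pow_sub_pow hab hn
  have hpow : (X 0 + C b * X 1 : MvPolynomial (Fin 2) R) ^ (n + 1) =
      X 0 ^ n * (X 0 + C b * X 1) + q * (X 0 + C b * X 1) * (X 1 * (C a * X 0 + X 1)) := by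
    linear_combination (X 0 + C b * X 1) * hq
  rw [Ideal.map_span, Set.image_pair]
  simp only [RingHom.coe_coe, map_pow, shearReflect_X_zero, shearReflect_relation hab,
    Ideal.span_pair_neg, hpow, Ideal.span_pair_add_mul_right]

end ConnectedSumCohomology

/-- Let `a·b = 2` and `n` be even.  Then
`R₁ = ℤ[x₁,x₂]/⟨x₁^{n+1}, x₂(a·x₁+x₂)⟩` and `R₂ = ℤ[x₁,x₂]/⟨x₁ⁿ(x₁+b·x₂), x₂(a·x₁+x₂)⟩`
are isomorphic as graded rings: there is a ring isomorphism carrying the degree-2 part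
`ℤx₁ ⊕ ℤx₂` of `R₁` into the degree-2 part of `R₂`. -/
theorem stmt11 (n : ℕ) (a b : ℤ) (hab : a * b = 2) (hn : Even n) :
    ∃ φ : R₁ n a ≃+* R₂ n a b,
      φ (u₁ n a) ∈ Submodule.span ℤ ({v₁ n a b, v₂ n a b} : Set (R₂ n a b)) ∧
      φ (u₂ n a) ∈ Submodule.span ℤ ({v₁ n a b, v₂ n a b} : Set (R₂ n a b)) := by
  open ConnectedSumCohomology in
  refine ⟨(Ideal.quotientEquivAlg _ _ (shearReflect b)
    (map_shearReflect_span hab hn).symm).toRingEquiv, ?_, ?_⟩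
  · refine Submodule.mem_span_pair.mpr ⟨1, b, ?_⟩
    simp [u₁, v₁, v₂]
  · refine Submodule.mem_span_pair.mpr ⟨0, -1, ?_⟩
    simp [u₂, v₂]
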